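/- arXiv:1502.03978 — 4 statements merged into one kernel-verified Lean document; each statement's English description precedes it below -/
import Mathlib

section
/- With strikes j₀ = 0 < j₁ < ... < j_I and the piecewise linear CALL function q⁰ of formula (3.1), the function q⁰ is the pointwise largest function among all convex, nonincreasing functions f : [0,∞) → [0,∞) satisfying f(j_i) ≤ q(j_i) for all i = 0, ..., I. -/
/-!
On `[0, ∞)` the function `q⁰` is the upper envelope of the lines extending its linear pieces
(past `j_I` the piece is the constant `q(j_I)`). Because the slopes increase, the line of piece `m`
lies below that of piece `n` to the right of `j_n` when `m ≤ n`, and to the left of `j_{n+1}` when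
`n ≤ m`. A pointwise attained supremum of affine functions is convex, and antitone when all slopes
are nonpositive. Conversely, a convex `f` below `q⁰` at the strikes lies below each chord of `q⁰`,
which is `q⁰` itself on every `[j_i, j_{i+1}]`; beyond `j_I` use that `f` is nonincreasing.
-/

open Set

noncomputable def secantLine (F : ℝ → ℝ) (a b k : ℝ) : ℝ := F a + slope F a b * (k - a)

@[simp]
lemma secantLine_left (F : ℝ → ℝ) (a b : ℝ) : secantLine F a b a = F a := by
  simp [secantLine]

lemma secantLine_right (F : ℝ → ℝ) (a b : ℝ) : secantLine F a b b = F b := by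
  have h := sub_smul_slope F a b
  rw [smul_eq_mul, vsub_eq_sub] at h
  rw [secantLine]
  linear_combination h

lemma convexOn_secantLine (F : ℝ → ℝ) (a b : ℝ) {s : Set ℝ} (hs : Convex ℝ s) :
    ConvexOn ℝ s (secantLine F a b) :=
  ⟨hs, fun x _ y _ μ ν _ _ hμν => le_of_eq <| by
    simp only [secantLine, smul_eq_mul]
    linear_combination (slope F a b * a - F a) * hμν⟩

lemma antitone_secantLine {F : ℝ → ℝ} {a b : ℝ} (h : slope F a b ≤ 0) :
    Antitone (secantLine F a b) := fun x y hxy => by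
  simp only [secantLine]
  nlinarith

lemma ConvexOn.le_secantLine_of_le {f F : ℝ → ℝ} {s : Set ℝ} (hf : ConvexOn ℝ s f)
    {a b k : ℝ} (ha : a ∈ s) (hb : b ∈ s) (hk : k ∈ Icc a b) (hfa : f a ≤ F a)
    (hfb : f b ≤ F b) : f k ≤ secantLine F a b k := by
  rcases hk.1.eq_or_lt with rfl | hak
  · simpa using hfa
  rcases hk.2.eq_or_lt with rfl | hkb
  · simpa [secantLine_right] using hfb
  have hab : 0 < b - a := by linarith
  have hchord := hf.secant_mono_aux1 ha hb hak hkb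
  rw [secantLine, slope_def_field, ← mul_le_mul_iff_right₀ hab]
  field_simp
  nlinarith

lemma convexOn_of_forall_le_of_forall_exists_eq {E ι : Type*} [AddCommGroup E]
    [Module ℝ E] {s : Set E} {g : E → ℝ} {φ : ι → E → ℝ} (hφ : ∀ i, ConvexOn ℝ s (φ i))
    (hle : ∀ i, ∀ x ∈ s, φ i x ≤ g x) (heq : ∀ x ∈ s, ∃ i, g x = φ i x) :
    ConvexOn ℝ s g := by
  have hs : Convex ℝ s := fun x hx => (hφ (heq x hx).choose).1 hx
  refine ⟨hs, fun x hx y hy μ ν hμ hν hμν => ?_⟩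
  obtain ⟨i, hi⟩ := heq _ (hs hx hy hμ hν hμν)
  calc g (μ • x + ν • y) = φ i (μ • x + ν • y) := hi
    _ ≤ μ • φ i x + ν • φ i y := (hφ i).2 hx hy hμ hν hμν
    _ ≤ μ • g x + ν • g y := by
      gcongr
      exacts [hle i x hx, hle i y hy]

lemma antitoneOn_of_forall_le_of_forall_exists_eq {α ι : Type*} [Preorder α] {s : Set α}
    {g : α → ℝ} {φ : ι → α → ℝ} (hφ : ∀ i, AntitoneOn (φ i) s)
    (hle : ∀ i, ∀ x ∈ s, φ i x ≤ g x) (heq : ∀ x ∈ s, ∃ i, g x = φ i x) :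
    AntitoneOn g s := fun x hx y hy hxy => by
  obtain ⟨i, hi⟩ := heq y hy
  exact hi ▸ (hφ i hx hy hxy).trans (hle i x hx)

lemma secantLine_succ_sub (F : ℝ → ℝ) (t : ℕ → ℝ) (n : ℕ) (k : ℝ) :
    secantLine F (t (n + 1)) (t (n + 2)) k - secantLine F (t n) (t (n + 1)) k =
      (slope F (t (n + 1)) (t (n + 2)) - slope F (t n) (t (n + 1))) * (k - t (n + 1)) := by
  have h := secantLine_right F (t n) (t (n + 1))
  simp only [secantLine] at h ⊢
  linear_combination -h

section NodeSequence

variable {F : ℝ → ℝ} {t : ℕ → ℝ}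

lemma secantLine_le_of_le_of_node_le (ht : Monotone t)
    (hσ : Monotone fun n => slope F (t n) (t (n + 1))) {m n : ℕ} (hmn : m ≤ n) {k : ℝ}
    (hk : t n ≤ k) : secantLine F (t m) (t (m + 1)) k ≤ secantLine F (t n) (t (n + 1)) k := by
  induction n, hmn using Nat.le_induction with
  | base => exact le_rfl
  | succ n _ ih =>
    have hstep := secantLine_succ_sub F t n k
    have hσn : slope F (t n) (t (n + 1)) ≤ slope F (t (n + 1)) (t (n + 2)) := hσ n.le_succ
    nlinarith [ih ((ht n.le_succ).trans hk)]

lemma secantLine_le_of_ge_of_le_node (ht : Monotone t)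
    (hσ : Monotone fun n => slope F (t n) (t (n + 1))) {m n : ℕ} (hnm : n ≤ m) {k : ℝ}
    (hk : k ≤ t (n + 1)) :
    secantLine F (t m) (t (m + 1)) k ≤ secantLine F (t n) (t (n + 1)) k := by
  induction m, hnm using Nat.le_induction with
  | base => exact le_rfl
  | succ m hnm ih =>
    have hstep := secantLine_succ_sub F t m k
    have hσm : slope F (t m) (t (m + 1)) ≤ slope F (t (m + 1)) (t (m + 2)) := hσ m.le_succ
    have hkm : k ≤ t (m + 1) := hk.trans (ht (by omega))
    nlinarith

lemma secantLine_le_of_mem_Icc (ht : Monotone t)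
    (hσ : Monotone fun n => slope F (t n) (t (n + 1))) {n : ℕ} {k : ℝ}
    (hk : k ∈ Icc (t n) (t (n + 1))) (m : ℕ) :
    secantLine F (t m) (t (m + 1)) k ≤ secantLine F (t n) (t (n + 1)) k :=
  (le_total m n).elim (secantLine_le_of_le_of_node_le ht hσ · hk.1)
    (secantLine_le_of_ge_of_le_node ht hσ · hk.2)

lemma Monotone.exists_mem_Icc_succ (ht : Monotone t) {k : ℝ} (h0 : t 0 ≤ k) {N : ℕ}
    (hN : k ≤ t N) : ∃ n, k ∈ Icc (t n) (t (n + 1)) := by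
  classical
  have hex : ∃ n, k ≤ t (n + 1) := ⟨N, hN.trans (ht N.le_succ)⟩
  refine ⟨Nat.find hex, ?_, Nat.find_spec hex⟩
  rcases h : Nat.find hex with _ | n
  · exact h0
  · exact (not_le.1 (Nat.find_min hex (h ▸ n.lt_succ_self))).le

variable {s : Set ℝ}

lemma secantLine_le_of_forall_eq_secantLine (ht : Monotone t)
    (hσ : Monotone fun n => slope F (t n) (t (n + 1)))
    (hF : ∀ n, ∀ k ∈ Icc (t n) (t (n + 1)), F k = secantLine F (t n) (t (n + 1)) k)
    (hcover : ∀ k ∈ s, ∃ n, k ∈ Icc (t n) (t (n + 1))) (m : ℕ) :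
    ∀ k ∈ s, secantLine F (t m) (t (m + 1)) k ≤ F k := fun k hk => by
  obtain ⟨n, hn⟩ := hcover k hk
  exact (hF n k hn).symm ▸ secantLine_le_of_mem_Icc ht hσ hn m

lemma convexOn_of_forall_eq_secantLine (hs : Convex ℝ s) (ht : Monotone t)
    (hσ : Monotone fun n => slope F (t n) (t (n + 1)))
    (hF : ∀ n, ∀ k ∈ Icc (t n) (t (n + 1)), F k = secantLine F (t n) (t (n + 1)) k)
    (hcover : ∀ k ∈ s, ∃ n, k ∈ Icc (t n) (t (n + 1))) : ConvexOn ℝ s F :=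
  convexOn_of_forall_le_of_forall_exists_eq (fun _ => convexOn_secantLine _ _ _ hs)
    (secantLine_le_of_forall_eq_secantLine ht hσ hF hcover)
    fun k hk => (hcover k hk).imp fun n hn => hF n k hn

lemma antitoneOn_of_forall_eq_secantLine (ht : Monotone t)
    (hσ : Monotone fun n => slope F (t n) (t (n + 1)))
    (hσ_nonpos : ∀ n, slope F (t n) (t (n + 1)) ≤ 0)
    (hF : ∀ n, ∀ k ∈ Icc (t n) (t (n + 1)), F k = secantLine F (t n) (t (n + 1)) k)
    (hcover : ∀ k ∈ s, ∃ n, k ∈ Icc (t n) (t (n + 1))) : AntitoneOn F s :=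
  antitoneOn_of_forall_le_of_forall_exists_eq
    (fun n => (antitone_secantLine (hσ_nonpos n)).antitoneOn _)
    (secantLine_le_of_forall_eq_secantLine ht hσ hF hcover)
    fun k hk => (hcover k hk).imp fun n hn => hF n k hn

lemma ConvexOn.le_of_forall_eq_secantLine {f : ℝ → ℝ} (hf : ConvexOn ℝ s f)
    (hF : ∀ n, ∀ k ∈ Icc (t n) (t (n + 1)), F k = secantLine F (t n) (t (n + 1)) k)
    (hcover : ∀ k ∈ s, ∃ n, k ∈ Icc (t n) (t (n + 1))) (hts : ∀ n, t n ∈ s)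
    (hnode : ∀ n, f (t n) ≤ F (t n)) : ∀ k ∈ s, f k ≤ F k := fun k hk => by
  obtain ⟨n, hn⟩ := hcover k hk
  rw [hF n k hn]
  exact hf.le_secantLine_of_le (hts n) (hts (n + 1)) hn (hnode n) (hnode (n + 1))

end NodeSequence

/-- Past `j I` the nodes continue with unit steps, so that every `k ≥ j 0` lies between two
consecutive nodes. -/
noncomputable def extendNodes {I : ℕ} (j : Fin (I + 1) → ℝ) (n : ℕ) : ℝ :=
  j (Fin.clamp n I) + (n - I : ℕ)

section ExtendNodes

variable {I : ℕ} (j : Fin (I + 1) → ℝ)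

lemma extendNodes_of_le {n : ℕ} (h : n ≤ I) :
    extendNodes j n = j ⟨n, Nat.lt_succ_of_le h⟩ := by
  simp [extendNodes, Fin.clamp, Nat.min_eq_left h, Nat.sub_eq_zero_of_le h]

lemma extendNodes_castSucc (i : Fin I) : extendNodes j i = j i.castSucc :=
  extendNodes_of_le j i.is_lt.le

lemma extendNodes_succ (i : Fin I) : extendNodes j (i + 1) = j i.succ :=
  extendNodes_of_le j i.is_lt

lemma extendNodes_zero : extendNodes j 0 = j 0 :=
  extendNodes_of_le j I.zero_le

lemma extendNodes_of_ge {n : ℕ} (h : I ≤ n) :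
    extendNodes j n = j (Fin.last I) + (n - I : ℕ) := by
  simp [extendNodes, Fin.clamp, Nat.min_eq_right h, Fin.last]

variable {j}

lemma monotone_extendNodes (hj : Monotone j) : Monotone (extendNodes j) := fun m n hmn =>
  add_le_add (hj (Fin.mk_le_mk.2 (min_le_min_right I hmn))) (by gcongr)

lemma last_le_extendNodes {n : ℕ} (h : I ≤ n) : j (Fin.last I) ≤ extendNodes j n := by
  rw [extendNodes_of_ge j h]
  exact le_add_of_nonneg_right (Nat.cast_nonneg _)

lemma exists_le_extendNodes (k : ℝ) : ∃ N, k ≤ extendNodes j N := by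
  refine ⟨I + ⌈k - j (Fin.last I)⌉₊, ?_⟩
  rw [extendNodes_of_ge j (Nat.le_add_right _ _), Nat.add_sub_cancel_left]
  linarith [Nat.le_ceil (k - j (Fin.last I))]

end ExtendNodes

lemma exists_fin_val_eq_or_le (I n : ℕ) : (∃ i : Fin I, (i : ℕ) = n) ∨ I ≤ n :=
  (lt_or_ge n I).imp (fun h => ⟨⟨n, h⟩, rfl⟩) id

section CallFunction

variable {I : ℕ} {j q : Fin (I + 1) → ℝ} {q0 : ℝ → ℝ}

lemma apply_node_of_interp (hj0 : j 0 = 0) (hjmono : StrictMono j) (hq0_zero : q0 0 = q 0)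
    (hq0_interp : ∀ i : Fin I, ∀ k, j i.castSucc < k → k ≤ j i.succ →
      q0 k = ((j i.succ - k) * q i.castSucc + (k - j i.castSucc) * q i.succ) /
        (j i.succ - j i.castSucc)) (i : Fin (I + 1)) :
    q0 (j i) = q i := by
  cases i using Fin.cases with
  | zero => rwa [hj0]
  | succ i =>
    have hlen : j i.succ - j i.castSucc ≠ 0 := (sub_pos.2 (hjmono i.castSucc_lt_succ)).ne'
    rw [hq0_interp i _ (hjmono i.castSucc_lt_succ) le_rfl, sub_self, zero_mul, zero_add,
      mul_div_cancel_left₀ _ hlen]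

lemma eq_secantLine_of_interp (hjmono : StrictMono j) (hdata : ∀ i, q0 (j i) = q i)
    (hq0_interp : ∀ i : Fin I, ∀ k, j i.castSucc < k → k ≤ j i.succ →
      q0 k = ((j i.succ - k) * q i.castSucc + (k - j i.castSucc) * q i.succ) /
        (j i.succ - j i.castSucc)) (i : Fin I) :
    ∀ k ∈ Icc (j i.castSucc) (j i.succ), q0 k = secantLine q0 (j i.castSucc) (j i.succ) k := by
  rintro k ⟨hk₁, hk₂⟩
  rcases hk₁.eq_or_lt with rfl | hk₁
  · rw [secantLine_left]
  have hlen : j i.succ - j i.castSucc ≠ 0 := (sub_pos.2 (hjmono i.castSucc_lt_succ)).ne'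
  rw [hq0_interp i k hk₁ hk₂, secantLine, slope_def_field, hdata, hdata]
  field_simp
  ring

lemma slope_extendNodes_of_ge (hconst : ∀ k, j (Fin.last I) ≤ k → q0 k = q (Fin.last I))
    {n : ℕ} (h : I ≤ n) : slope q0 (extendNodes j n) (extendNodes j (n + 1)) = 0 := by
  rw [slope_def_field, hconst _ (last_le_extendNodes h), hconst _ (last_le_extendNodes (by omega)),
    sub_self, zero_div]

lemma eq_secantLine_extendNodes (hconst : ∀ k, j (Fin.last I) ≤ k → q0 k = q (Fin.last I))
    (hpiece : ∀ i : Fin I, ∀ k ∈ Icc (j i.castSucc) (j i.succ),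
      q0 k = secantLine q0 (j i.castSucc) (j i.succ) k) (n : ℕ) :
    ∀ k ∈ Icc (extendNodes j n) (extendNodes j (n + 1)),
      q0 k = secantLine q0 (extendNodes j n) (extendNodes j (n + 1)) k := by
  obtain ⟨i, rfl⟩ | hn := exists_fin_val_eq_or_le I n
  · rw [extendNodes_castSucc, extendNodes_succ]
    exact hpiece i
  · intro k hk
    rw [secantLine, slope_extendNodes_of_ge hconst hn, zero_mul, add_zero,
      hconst _ (last_le_extendNodes hn), hconst _ ((last_le_extendNodes hn).trans hk.1)]

lemma monotone_slope_extendNodes (hdata : ∀ i, q0 (j i) = q i)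
    (hconst : ∀ k, j (Fin.last I) ≤ k → q0 k = q (Fin.last I))
    (hslope_nonpos : ∀ i : Fin I,
      (q i.succ - q i.castSucc) / (j i.succ - j i.castSucc) ≤ 0)
    (hslope_mono : ∀ i i' : Fin I, i ≤ i' →
      (q i.succ - q i.castSucc) / (j i.succ - j i.castSucc) ≤
        (q i'.succ - q i'.castSucc) / (j i'.succ - j i'.castSucc)) :
    Monotone fun n => slope q0 (extendNodes j n) (extendNodes j (n + 1)) := by
  have hnode (i : Fin I) : slope q0 (extendNodes j i) (extendNodes j (i + 1)) =
      (q i.succ - q i.castSucc) / (j i.succ - j i.castSucc) := by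
    rw [extendNodes_castSucc, extendNodes_succ, slope_def_field, hdata, hdata]
  intro m n hmn
  obtain ⟨i', rfl⟩ | hn := exists_fin_val_eq_or_le I n
  · obtain ⟨i, rfl⟩ : ∃ i : Fin I, (i : ℕ) = m := ⟨⟨m, hmn.trans_lt i'.is_lt⟩, rfl⟩
    simpa only [hnode] using hslope_mono i i' hmn
  · simp only [slope_extendNodes_of_ge hconst hn]
    obtain ⟨i, rfl⟩ | hm := exists_fin_val_eq_or_le I m
    · simpa only [hnode] using hslope_nonpos i
    · exact (slope_extendNodes_of_ge hconst hm).le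

lemma apply_extendNodes_le_of_antitoneOn (hj0 : j 0 = 0) (hjmono : Monotone j)
    (hdata : ∀ i, q0 (j i) = q i) (hconst : ∀ k, j (Fin.last I) ≤ k → q0 k = q (Fin.last I))
    {f : ℝ → ℝ} (hf : AntitoneOn f (Ici 0)) (hfq : ∀ i, f (j i) ≤ q i) (n : ℕ) :
    f (extendNodes j n) ≤ q0 (extendNodes j n) := by
  rcases le_total n I with hn | hn
  · rw [extendNodes_of_le j hn, hdata]
    exact hfq _
  · have hlast : j (Fin.last I) ∈ Ici 0 := hj0 ▸ hjmono (Fin.zero_le _)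
    calc f (extendNodes j n) ≤ f (j (Fin.last I)) :=
          hf hlast (hlast.trans (last_le_extendNodes hn)) (last_le_extendNodes hn)
      _ ≤ q (Fin.last I) := hfq _
      _ = q0 (extendNodes j n) := (hconst _ (last_le_extendNodes hn)).symm

end CallFunction

/-- The piecewise-linear CALL function `q⁰` is the pointwise largest convex,
nonincreasing, nonnegative function lying weakly below the data points
`(jᵢ, q(jᵢ))`, and it attains the data values. -/
theorem piecewise_linear_call_function_is_largest
    (I : ℕ) (j : Fin (I + 1) → ℝ) (q : Fin (I + 1) → ℝ) (q0 : ℝ → ℝ)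
    (hj0 : j 0 = 0) (hjmono : StrictMono j)
    (hqpos : ∀ i, 0 < q i)
    (hslope_nonpos : ∀ i : Fin I,
      (q i.succ - q i.castSucc) / (j i.succ - j i.castSucc) ≤ 0)
    (hslope_mono : ∀ i i' : Fin I, i ≤ i' →
      (q i.succ - q i.castSucc) / (j i.succ - j i.castSucc) ≤
        (q i'.succ - q i'.castSucc) / (j i'.succ - j i'.castSucc))
    (hq0_zero : q0 0 = q 0)
    (hq0_interp : ∀ i : Fin I, ∀ k, j i.castSucc < k → k ≤ j i.succ →
      q0 k = ((j i.succ - k) * q i.castSucc + (k - j i.castSucc) * q i.succ) /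
        (j i.succ - j i.castSucc))
    (hq0_tail : ∀ k, j (Fin.last I) < k → q0 k = q (Fin.last I)) :
    (ConvexOn ℝ (Set.Ici (0 : ℝ)) q0 ∧ AntitoneOn q0 (Set.Ici (0 : ℝ)) ∧
      (∀ k ∈ Set.Ici (0 : ℝ), 0 ≤ q0 k) ∧ (∀ i, q0 (j i) = q i)) ∧
    ∀ f : ℝ → ℝ,
      ConvexOn ℝ (Set.Ici (0 : ℝ)) f → AntitoneOn f (Set.Ici (0 : ℝ)) →
      (∀ k ∈ Set.Ici (0 : ℝ), 0 ≤ f k) → (∀ i, f (j i) ≤ q i) →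
      ∀ k ∈ Set.Ici (0 : ℝ), f k ≤ q0 k := by
  have hdata := apply_node_of_interp hj0 hjmono hq0_zero hq0_interp
  have hconst (k : ℝ) (hk : j (Fin.last I) ≤ k) : q0 k = q (Fin.last I) :=
    hk.eq_or_lt.elim (· ▸ hdata _) (hq0_tail k)
  have ht : Monotone (extendNodes j) := monotone_extendNodes hjmono.monotone
  have ht0 : extendNodes j 0 = 0 := (extendNodes_zero j).trans hj0
  have hσ := monotone_slope_extendNodes hdata hconst hslope_nonpos hslope_mono
  have hF := eq_secantLine_extendNodes hconst (eq_secantLine_of_interp hjmono hdata hq0_interp)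
  have hcover (k : ℝ) (hk : k ∈ Ici 0) :
      ∃ n, k ∈ Icc (extendNodes j n) (extendNodes j (n + 1)) :=
    ht.exists_mem_Icc_succ (ht0 ▸ hk) (exists_le_extendNodes k).choose_spec
  have hanti : AntitoneOn q0 (Ici 0) := antitoneOn_of_forall_eq_secantLine ht hσ
    (fun n => (hσ (le_max_left n I)).trans_eq (slope_extendNodes_of_ge hconst (le_max_right n I)))
    hF hcover
  refine ⟨⟨convexOn_of_forall_eq_secantLine (convex_Ici 0) ht hσ hF hcover, hanti,
    fun k hk => ?_, hdata⟩, fun f hf hf_anti _ hfq => hf.le_of_forall_eq_secantLine hF hcover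
      (fun n => ht0 ▸ ht n.zero_le)
      (apply_extendNodes_le_of_antitoneOn hj0 hjmono.monotone hdata hconst hf_anti hfq)⟩
  calc (0 : ℝ) ≤ q (Fin.last I) := (hqpos _).le
    _ = q0 (max k (j (Fin.last I))) := (hconst _ (le_max_right _ _)).symm
    _ ≤ q0 k := hanti hk (le_max_of_le_left hk : (0 : ℝ) ≤ _) (le_max_left _ _)
end

section
/- With φ, Φ, and g_k^h(x; φ) as in the density-smoothing construction, the function x ↦ g_k^h(x; φ) is convex, nondecreasing, nonnegative, and satisfies 0 ≤ g_k^h(x; φ) − max(x − k, 0) ≤ h·∫ |u|·φ(u) du for all x; in particular g_k^h(·; φ) converges uniformly to the call payoff g⁰_k as h → 0. -/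
/-! For `h > 0` the substitution `t = (x - k) / h` turns the defining formula into
`g_k^h(x; φ) = ∫ (x - k - h u)⁺ φ(u) du`, the call payoff averaged over the shifted prices
`x - h u`. Convexity, monotonicity and positivity are then inherited from `x ↦ (x - c)⁺`;
since `φ` has mass one and mean zero, `∫ (x - k - h u) φ(u) du = x - k` gives the lower bound,
and `(c - h u)⁺ ≤ c⁺ + h |u|` gives the upper bound, uniformly in `x`. -/

open MeasureTheory Filter Topology Set

theorem convexOn_integral {α : Type*} [MeasurableSpace α] {μ : Measure α} {f : ℝ → α → ℝ}
    (hf : ∀ u, ConvexOn ℝ univ (f · u)) (hint : ∀ x, Integrable (f x) μ) :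
    ConvexOn ℝ univ (fun x => ∫ u, f x u ∂μ) := by
  refine ⟨convex_univ, fun x _ y _ a b ha hb hab => ?_⟩
  calc ∫ u, f (a • x + b • y) u ∂μ ≤ ∫ u, a • f x u + b • f y u ∂μ :=
        integral_mono (hint _) (((hint x).smul a).add ((hint y).smul b))
          fun u => (hf u).2 trivial trivial ha hb hab
    _ = a • ∫ u, f x u ∂μ + b • ∫ u, f y u ∂μ := by
        rw [integral_add (f := fun u => a • f x u) (g := fun u => b • f y u) ((hint x).smul a)
          ((hint y).smul b), integral_smul, integral_smul]

theorem monotone_integral {α : Type*} [MeasurableSpace α] {μ : Measure α} {f : ℝ → α → ℝ}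
    (hf : ∀ u, Monotone (f · u)) (hint : ∀ x, Integrable (f x) μ) :
    Monotone (fun x => ∫ u, f x u ∂μ) :=
  fun _ _ hxy => integral_mono (hint _) (hint _) fun u => hf u hxy

theorem tendstoUniformly_nhdsGT_of_dist_le_mul {β : Type*} {F : ℝ → β → ℝ} {f : β → ℝ} (C : ℝ)
    (hF : ∀ h > 0, ∀ x, dist (f x) (F h x) ≤ h * C) :
    TendstoUniformly F f (𝓝[>] 0) := by
  rw [Metric.tendstoUniformly_iff]
  intro ε hε
  have hlim : Tendsto (fun h : ℝ => h * C) (𝓝[>] 0) (𝓝 0) := by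
    simpa using (tendsto_id.mul_const C).mono_left (nhdsWithin_le_nhds (a := (0 : ℝ)))
  filter_upwards [hlim.eventually (gt_mem_nhds hε), self_mem_nhdsWithin] with h hsmall hpos x
  exact (hF h hpos x).trans_lt hsmall

theorem max_sub_mul_le (c h u : ℝ) : max (c - h * u) 0 ≤ max c 0 + |h| * |u| := by
  have := neg_abs_le (h * u)
  rw [abs_mul] at this
  exact max_le (by linarith [le_max_left c 0]) (by positivity)

noncomputable def smoothedCallPayoff (φ : ℝ → ℝ) (k h x : ℝ) : ℝ :=
  ∫ u, max (x - k - h * u) 0 * φ u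

theorem smoothedCallPayoff_nonneg {φ : ℝ → ℝ} (hφ_nonneg : ∀ u, 0 ≤ φ u) (k h x : ℝ) :
    0 ≤ smoothedCallPayoff φ k h x :=
  integral_nonneg fun u => mul_nonneg (le_max_right _ _) (hφ_nonneg u)

section SmoothedCallPayoff

variable {φ : ℝ → ℝ} (hφ_nonneg : ∀ u, 0 ≤ φ u) (hφ_int : Integrable φ)
  (habs : Integrable (fun u => |u| * φ u))
include hφ_nonneg hφ_int habs

theorem integrable_id_mul_of_abs_mul : Integrable (fun u => u * φ u) := by
  refine (integrable_norm_iff (continuous_id.aestronglyMeasurable.mul hφ_int.1)).1 ?_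
  simpa [abs_mul, abs_of_nonneg (hφ_nonneg _)] using habs

theorem integrable_max_sub_mul_mul (c h : ℝ) :
    Integrable (fun u => max (c - h * u) 0 * φ u) := by
  refine ((hφ_int.const_mul (max c 0)).add (habs.const_mul |h|)).mono'
    (((continuous_const.sub (continuous_const.mul continuous_id)).max
      continuous_const).aestronglyMeasurable.mul hφ_int.1) (Eventually.of_forall fun u => ?_)
  rw [Real.norm_eq_abs, abs_of_nonneg (mul_nonneg (le_max_right _ _) (hφ_nonneg u))]
  calc max (c - h * u) 0 * φ u ≤ (max c 0 + |h| * |u|) * φ u :=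
        mul_le_mul_of_nonneg_right (max_sub_mul_le c h u) (hφ_nonneg u)
    _ = max c 0 * φ u + |h| * (|u| * φ u) := by ring

theorem integrable_sub_mul_mul (c h : ℝ) : Integrable (fun u => (c - h * u) * φ u) := by
  simp_rw [sub_mul, mul_assoc]
  exact (hφ_int.const_mul c).sub
    ((integrable_id_mul_of_abs_mul hφ_nonneg hφ_int habs).const_mul h)

theorem integral_sub_mul_mul (hφ_prob : ∫ u, φ u = 1) (hmean : ∫ u, u * φ u = 0) (c h : ℝ) :
    ∫ u, (c - h * u) * φ u = c := by
  simp_rw [sub_mul, mul_assoc]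
  rw [integral_sub (hφ_int.const_mul c)
    ((integrable_id_mul_of_abs_mul hφ_nonneg hφ_int habs).const_mul h), integral_const_mul,
    integral_const_mul, hφ_prob, hmean]
  ring

theorem convexOn_smoothedCallPayoff (k h : ℝ) : ConvexOn ℝ univ (smoothedCallPayoff φ k h) :=
  convexOn_integral
    (fun u => ((((convexOn_id convex_univ).add_const (-(k + h * u))).sup
      (convexOn_const 0 convex_univ)).smul (hφ_nonneg u)).congr fun x _ => by
        change φ u * max (x + -(k + h * u)) 0 = _
        rw [mul_comm, ← sub_eq_add_neg, sub_add_eq_sub_sub])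
    fun x => integrable_max_sub_mul_mul hφ_nonneg hφ_int habs (x - k) h

theorem monotone_smoothedCallPayoff (k h : ℝ) : Monotone (smoothedCallPayoff φ k h) :=
  monotone_integral
    (fun u _ _ hxy => mul_le_mul_of_nonneg_right (max_le_max (by linarith) le_rfl) (hφ_nonneg u))
    fun x => integrable_max_sub_mul_mul hφ_nonneg hφ_int habs (x - k) h

theorem sub_le_smoothedCallPayoff (hφ_prob : ∫ u, φ u = 1) (hmean : ∫ u, u * φ u = 0) (k h x : ℝ) :
    x - k ≤ smoothedCallPayoff φ k h x := by
  rw [← integral_sub_mul_mul hφ_nonneg hφ_int habs hφ_prob hmean (x - k) h]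
  exact integral_mono (integrable_sub_mul_mul hφ_nonneg hφ_int habs (x - k) h)
    (integrable_max_sub_mul_mul hφ_nonneg hφ_int habs (x - k) h)
    fun u => mul_le_mul_of_nonneg_right (le_max_left _ _) (hφ_nonneg u)

theorem smoothedCallPayoff_le_max_add (hφ_prob : ∫ u, φ u = 1) (k h x : ℝ) :
    smoothedCallPayoff φ k h x ≤ max (x - k) 0 + |h| * ∫ u, |u| * φ u := by
  calc smoothedCallPayoff φ k h x ≤ ∫ u, (max (x - k) 0 * φ u + |h| * (|u| * φ u)) :=
        integral_mono (integrable_max_sub_mul_mul hφ_nonneg hφ_int habs (x - k) h)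
          ((hφ_int.const_mul _).add (habs.const_mul _)) fun u => by
            rw [← mul_assoc, ← add_mul]
            exact mul_le_mul_of_nonneg_right (max_sub_mul_le _ h u) (hφ_nonneg u)
    _ = max (x - k) 0 + |h| * ∫ u, |u| * φ u := by
        rw [integral_add (hφ_int.const_mul _) (habs.const_mul _), integral_const_mul,
          integral_const_mul, hφ_prob, mul_one]

theorem smoothedCallPayoff_eq_setIntegral {h : ℝ} (hh : 0 < h) (k x : ℝ) :
    smoothedCallPayoff φ k h x = (∫ u in Iic ((x - k) / h), φ u) * (x - k) -
      h * ∫ u in Iic ((x - k) / h), u * φ u := by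
  have hint := integrable_id_mul_of_abs_mul hφ_nonneg hφ_int habs
  rw [← integral_mul_const, ← integral_const_mul,
    ← integral_sub (hφ_int.restrict.mul_const _) (hint.restrict.const_mul h), smoothedCallPayoff,
    ← setIntegral_eq_integral_of_forall_compl_eq_zero (s := Iic ((x - k) / h))]
  · refine setIntegral_congr_fun measurableSet_Iic fun u hu => ?_
    have : h * u ≤ x - k := (le_div_iff₀' hh).1 hu
    rw [max_eq_left (by linarith)]
    ring
  · intro u hu
    have : x - k < h * u := (div_lt_iff₀' hh).1 (not_le.1 hu)
    rw [max_eq_right (by linarith), zero_mul]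

end SmoothedCallPayoff

/-- The density-smoothed call payoff `g_k^h(·;φ)` is convex, nondecreasing,
nonnegative, satisfies `0 ≤ g_k^h(x;φ) − max(x−k,0) ≤ h·∫|u|φ(u)du`, and in
particular converges uniformly to the call payoff as `h → 0⁺`. -/
theorem density_smoother_properties
    (φ : ℝ → ℝ) (k : ℝ)
    (hφ_nonneg : ∀ u, 0 ≤ φ u)
    (hφ_int : Integrable φ)
    (hφ_prob : ∫ u, φ u = 1)
    (hmean : ∫ u, u * φ u = 0)
    (habs : Integrable (fun u => |u| * φ u))
    (Φ : ℝ → ℝ) (hΦ : ∀ t, Φ t = ∫ u in Set.Iic t, φ u)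
    (g : ℝ → ℝ → ℝ)
    (hg : ∀ h x, g h x = Φ ((x - k) / h) * (x - k) -
      h * ∫ u in Set.Iic ((x - k) / h), u * φ u) :
    (∀ h : ℝ, 0 < h →
      ConvexOn ℝ Set.univ (g h) ∧ Monotone (g h) ∧ (∀ x, 0 ≤ g h x) ∧
      ∀ x, 0 ≤ g h x - max (x - k) 0 ∧
        g h x - max (x - k) 0 ≤ h * ∫ u, |u| * φ u) ∧
    TendstoUniformly (fun h x => g h x) (fun x => max (x - k) 0)
      (nhdsWithin 0 (Set.Ioi 0)) := by
  have hrep : ∀ h > 0, g h = smoothedCallPayoff φ k h := fun h hh => funext fun x => by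
    rw [hg, hΦ, smoothedCallPayoff_eq_setIntegral hφ_nonneg hφ_int habs hh]
  have hbounds : ∀ h > 0, ∀ x, 0 ≤ smoothedCallPayoff φ k h x - max (x - k) 0 ∧
      smoothedCallPayoff φ k h x - max (x - k) 0 ≤ h * ∫ u, |u| * φ u := fun h hh x => by
    have hupper := smoothedCallPayoff_le_max_add hφ_nonneg hφ_int habs hφ_prob k h x
    rw [abs_of_pos hh] at hupper
    rw [sub_nonneg, sub_le_iff_le_add']
    exact ⟨max_le (sub_le_smoothedCallPayoff hφ_nonneg hφ_int habs hφ_prob hmean k h x)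
        (smoothedCallPayoff_nonneg hφ_nonneg k h x), hupper⟩
  refine ⟨fun h hh => ?_,
    tendstoUniformly_nhdsGT_of_dist_le_mul (∫ u, |u| * φ u) fun h hh x => ?_⟩ <;> rw [hrep h hh]
  · exact ⟨convexOn_smoothedCallPayoff hφ_nonneg hφ_int habs k h,
      monotone_smoothedCallPayoff hφ_nonneg hφ_int habs k h,
      smoothedCallPayoff_nonneg hφ_nonneg k h, hbounds h hh⟩
  · obtain ⟨hlower, hupper⟩ := hbounds h hh x
    rwa [Real.dist_eq, abs_sub_comm, abs_of_nonneg hlower]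
end

section
/- Let ν be a finite Borel measure on [0,∞) with finite first moment and define C(t) = ∫ max(x − t, 0) dν(x). Then C is convex and nonincreasing on [0,∞), and at every continuity point t of z ↦ ν((z,∞)), C is differentiable with C'(t) = −ν((t, ∞)). -/
open MeasureTheory Set

/-! Writing `(x - t)⁺ = ∫_t^∞ 1{s < x} ds` and applying Tonelli gives the tail formula
`C(t) = ∫_t^∞ ν((s,∞)) ds`. Convexity and monotonicity already hold for each payoff
`t ↦ (x - t)⁺`, and the fundamental theorem of calculus differentiates the tail integral at
every continuity point of the integrand. -/

lemma convexOn_posPart_sub_left (x : ℝ) : ConvexOn ℝ univ fun t : ℝ => max (x - t) 0 :=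
  ((convexOn_const x convex_univ).sub (concaveOn_id convex_univ)).sup (convexOn_const 0 convex_univ)

lemma antitone_posPart_sub_left (x : ℝ) : Antitone fun t : ℝ => max (x - t) 0 :=
  fun _ _ h => max_le_max (by linarith) le_rfl

lemma lintegral_measure_Ioi (ν : Measure ℝ) [SFinite ν] (t : ℝ) :
    ∫⁻ s in Ioi t, ν (Ioi s) = ∫⁻ x, ENNReal.ofReal (x - t) ∂ν := by
  have hmeas : Measurable (Function.uncurry fun s x : ℝ => (Ioi s).indicator (1 : ℝ → ENNReal) x) :=
    measurable_const.indicator (measurableSet_lt measurable_fst measurable_snd)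
  have hswap (s x : ℝ) : (Ioi s).indicator (1 : ℝ → ENNReal) x = (Iio x).indicator 1 s := by
    simp only [indicator_apply, mem_Ioi, mem_Iio, Pi.one_apply]
  calc ∫⁻ s in Ioi t, ν (Ioi s)
      = ∫⁻ s in Ioi t, (∫⁻ x, (Ioi s).indicator 1 x ∂ν) := by
        simp_rw [lintegral_indicator_one measurableSet_Ioi]
    _ = ∫⁻ x, (∫⁻ s in Ioi t, (Iio x).indicator 1 s) ∂ν := by
        simp_rw [lintegral_lintegral_swap hmeas.aemeasurable, hswap]
    _ = ∫⁻ x, ENNReal.ofReal (x - t) ∂ν := by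
        simp_rw [lintegral_indicator_one measurableSet_Iio,
          Measure.restrict_apply measurableSet_Iio, Iio_inter_Ioi, Real.volume_Ioo]

lemma hasDerivAt_integral_Ioi {E : Type*} [NormedAddCommGroup E] [NormedSpace ℝ E]
    [CompleteSpace E] {F : ℝ → E} {t : ℝ} (hF : ∀ a, IntegrableOn F (Ioi a))
    (hmeas : StronglyMeasurableAtFilter F (nhds t)) (hcont : ContinuousAt F t) :
    HasDerivAt (fun u => ∫ s in Ioi u, F s) (-F t) t := by
  have hsplit : (fun u => ∫ s in Ioi u, F s) = fun u => (∫ s in Ioi t, F s) - ∫ s in t..u, F s :=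
    funext fun u => by rw [← intervalIntegral.integral_Ioi_sub_Ioi' (hF t) (hF u), sub_sub_cancel]
  rw [hsplit]
  exact (intervalIntegral.integral_hasDerivAt_right .refl hmeas hcont).const_sub _

section FiniteMeasure

variable (ν : Measure ℝ) [IsFiniteMeasure ν]

lemma antitone_measureReal_Ioi : Antitone fun s => ν.real (Ioi s) :=
  fun _ _ h => measureReal_mono (Ioi_subset_Ioi h)

lemma integral_posPart_sub_eq_integral_Ioi (t : ℝ) :
    ∫ x, max (x - t) 0 ∂ν = ∫ s in Ioi t, ν.real (Ioi s) := by
  have hmeas : Measurable fun s => ν (Ioi s) :=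
    Antitone.measurable fun _ _ h => measure_mono (Ioi_subset_Ioi h)
  simp_rw [measureReal_def]
  rw [integral_eq_lintegral_of_nonneg_ae (f := fun x => max (x - t) 0)
      (ae_of_all _ fun _ => le_max_right _ _) (by fun_prop),
    integral_toReal hmeas.aemeasurable (ae_of_all _ fun s => measure_lt_top ν _),
    lintegral_measure_Ioi]
  simp only [ENNReal.ofReal_max, ENNReal.ofReal_zero, zero_le, sup_of_le_left]

lemma integrableOn_measureReal_Ioi (hmom : Integrable (fun x => x) ν) (t : ℝ) :
    IntegrableOn (fun s => ν.real (Ioi s)) (Ioi t) := by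
  refine ⟨(antitone_measureReal_Ioi ν).measurable.aestronglyMeasurable, ?_⟩
  rw [hasFiniteIntegral_iff_enorm]
  simp_rw [measureReal_def, Real.enorm_eq_ofReal ENNReal.toReal_nonneg,
    ENNReal.ofReal_toReal (measure_ne_top ν _), lintegral_measure_Ioi]
  exact (hmom.sub (integrable_const t)).lintegral_lt_top

end FiniteMeasure

theorem breeden_litzenberger_general
    (ν : Measure ℝ) [IsFiniteMeasure ν]
    (hmom : Integrable (fun x => x) ν)
    (C : ℝ → ℝ) (hC : ∀ t, C t = ∫ x, max (x - t) 0 ∂ν) :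
    ConvexOn ℝ (Set.Ici (0 : ℝ)) C ∧
    AntitoneOn C (Set.Ici (0 : ℝ)) ∧
    ∀ t : ℝ, 0 ≤ t →
      ContinuousAt (fun z => (ν (Set.Ioi z)).toReal) t →
      HasDerivAt C (-(ν (Set.Ioi t)).toReal) t := by
  obtain rfl : C = fun t => ∫ x, max (x - t) 0 ∂ν := funext hC
  have hint (t : ℝ) : Integrable (fun x => max (x - t) 0) ν :=
    (hmom.sub (integrable_const t)).pos_part
  refine ⟨integral_convexOn_of_integrand_ae (convex_Ici 0)
      (ae_of_all _ fun x => (convexOn_posPart_sub_left x).subset (subset_univ _) (convex_Ici 0))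
      fun t _ => hint t,
    integral_antitoneOn_of_integrand_ae
      (ae_of_all _ fun x => (antitone_posPart_sub_left x).antitoneOn _) fun t _ => hint t,
    fun t _ hcont => ?_⟩
  rw [funext (integral_posPart_sub_eq_integral_Ioi ν)]
  exact hasDerivAt_integral_Ioi (integrableOn_measureReal_Ioi ν hmom)
    (antitone_measureReal_Ioi ν).measurable.stronglyMeasurable.stronglyMeasurableAtFilter hcont

/-- Breeden–Litzenberger: `C(t) = ∫ max(x − t, 0) dν(x)` is convex and
nonincreasing on `[0,∞)`, and at every continuity point `t ≥ 0` of the survival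
function `z ↦ ν((z,∞))`, `C` is differentiable with `C'(t) = −ν((t,∞))`. -/
theorem breeden_litzenberger
    (ν : Measure ℝ) [IsFiniteMeasure ν]
    (hsupp : ν (Set.Iio 0) = 0)
    (hmom : Integrable (fun x => x) ν)
    (C : ℝ → ℝ) (hC : ∀ t, C t = ∫ x, max (x - t) 0 ∂ν) :
    ConvexOn ℝ (Set.Ici (0 : ℝ)) C ∧
    AntitoneOn C (Set.Ici (0 : ℝ)) ∧
    ∀ t : ℝ, 0 ≤ t →
      ContinuousAt (fun z => (ν (Set.Ioi z)).toReal) t →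
      HasDerivAt C (-(ν (Set.Ioi t)).toReal) t :=
  breeden_litzenberger_general ν hmom C hC
end

section
/- Let Z = {0 = τ₀ < τ₁ < ... < τ_I} be a finite set of strikes and w_k(τ) ≥ 0 superhedging weights with Σ_{τ∈Z} w_k(τ) = 1, supported (except possibly at τ = 0) on strikes τ with |k − τ| < (1+δ)·M where M is the mesh of Z\{0}. If F : [0,∞) → [0,∞) is convex, decreasing, three times continuously differentiable with |F'''| ≤ α, and τ₁ ≤ k − δM, then |Σ_{τ∈Z} w_k(τ)·(F(τ) − F(k))| ≤ |F'(k)|·(δ+1)·M + F''(k)·(δ+1)²·M² + (α/6)·(1+δ)³·M³. -/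
open Finset
open scoped Nat

/-!
Only strikes within distance `r = (1 + δ) M` of `k` carry weight; the strike `0` is
excluded because `τ₁ ≤ k - δ M`. For each of them, Taylor's formula at `k` with Lagrange
remainder gives `|F τ - F k| ≤ |F' k| r + F'' k r² / 2 + α r³ / 6`, where `F'' k ≥ 0` by
convexity, and averaging against the probability weights `w` preserves this bound.
-/

lemma abs_sub_taylor_le {f : ℝ → ℝ} {n : ℕ} (hf : ContDiff ℝ (n + 1) f) {C : ℝ}
    (hC : ∀ y, |iteratedDeriv (n + 1) f y| ≤ C) (x₀ x : ℝ) :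
    |f x - ∑ j ∈ range (n + 1), iteratedDeriv j f x₀ / j ! * (x - x₀) ^ j|
      ≤ C * |x - x₀| ^ (n + 1) / (n + 1)! := by
  rcases eq_or_ne x₀ x with rfl | hx
  · simp [sum_range_succ']
  obtain ⟨y, -, hy⟩ := taylor_mean_remainder_lagrange_iteratedDeriv hx hf.contDiffOn
  have htaylor : taylorWithinEval f n (Set.uIcc x₀ x) x₀ x =
      ∑ j ∈ range (n + 1), iteratedDeriv j f x₀ / j ! * (x - x₀) ^ j := by
    rw [taylor_within_apply]
    refine sum_congr rfl fun j hj => ?_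
    have hj : (j : WithTop ℕ∞) ≤ n + 1 := by exact_mod_cast (mem_range.1 hj).le
    rw [iteratedDerivWithin_eq_iteratedDeriv (uniqueDiffOn_uIcc hx) (hf.contDiffAt.of_le hj)
      Set.left_mem_uIcc, smul_eq_mul]
    ring
  rw [← htaylor, hy, abs_div, abs_mul, abs_pow, Nat.abs_cast]
  gcongr
  exact hC y

lemma abs_sub_taylor_two_le {f : ℝ → ℝ} (hf : ContDiff ℝ 3 f) {C : ℝ}
    (hC : ∀ y, |iteratedDeriv 3 f y| ≤ C) (x₀ x : ℝ) :
    |f x - f x₀ - deriv f x₀ * (x - x₀) - deriv (deriv f) x₀ / 2 * (x - x₀) ^ 2|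
      ≤ C / 6 * |x - x₀| ^ 3 := by
  have h := abs_sub_taylor_le (n := 2) hf hC x₀ x
  simp only [sum_range_succ, sum_range_zero, iteratedDeriv_succ, iteratedDeriv_zero] at h
  convert h using 2 <;> norm_num [Nat.factorial] <;> ring

lemma abs_sub_le_of_taylor_two {f : ℝ → ℝ} (hf : ContDiff ℝ 3 f) {C : ℝ}
    (hC : ∀ y, |iteratedDeriv 3 f y| ≤ C) {x₀ x r : ℝ} (hx : |x - x₀| ≤ r)
    (hf'' : 0 ≤ deriv (deriv f) x₀) :
    |f x - f x₀| ≤ |deriv f x₀| * r + deriv (deriv f) x₀ / 2 * r ^ 2 + C / 6 * r ^ 3 := by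
  have hC0 : 0 ≤ C := (abs_nonneg _).trans (hC x)
  have hr : 0 ≤ |x - x₀| := abs_nonneg _
  have hlin : |deriv f x₀ * (x - x₀)| ≤ |deriv f x₀| * r := by
    rw [abs_mul]
    gcongr
  have hquad :
      |deriv (deriv f) x₀ / 2 * (x - x₀) ^ 2| ≤ deriv (deriv f) x₀ / 2 * r ^ 2 := by
    have hsq : (x - x₀) ^ 2 ≤ r ^ 2 := by
      rw [← sq_abs]
      gcongr
    rw [abs_mul, abs_of_nonneg (by positivity), abs_of_nonneg (sq_nonneg _)]
    gcongr
  have hcub : C / 6 * |x - x₀| ^ 3 ≤ C / 6 * r ^ 3 := by gcongr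
  calc |f x - f x₀|
      = |(f x - f x₀ - deriv f x₀ * (x - x₀) - deriv (deriv f) x₀ / 2 * (x - x₀) ^ 2)
          + deriv f x₀ * (x - x₀) + deriv (deriv f) x₀ / 2 * (x - x₀) ^ 2| := by ring_nf
    _ ≤ |f x - f x₀ - deriv f x₀ * (x - x₀) - deriv (deriv f) x₀ / 2 * (x - x₀) ^ 2|
          + |deriv f x₀ * (x - x₀)| + |deriv (deriv f) x₀ / 2 * (x - x₀) ^ 2| :=
        abs_add_three _ _ _
    _ ≤ _ := by linarith [abs_sub_taylor_two_le hf hC x₀ x]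

lemma ConvexOn.deriv_deriv_nonneg {S : Set ℝ} {f : ℝ → ℝ} (hf : ConvexOn ℝ S f)
    (hd : ∀ x ∈ S, DifferentiableAt ℝ f x) {x : ℝ} (hx : S ∈ nhds x) :
    0 ≤ deriv (deriv f) x := by
  rw [← derivWithin_of_mem_nhds hx]
  exact (hf.monotoneOn_deriv hd).derivWithin_nonneg

lemma abs_sum_mul_le_of_sum_eq_one {ι : Type*} {s : Finset ι} {w g : ι → ℝ} {C : ℝ}
    (hw : ∀ i ∈ s, 0 ≤ w i) (hsum : ∑ i ∈ s, w i = 1)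
    (hg : ∀ i ∈ s, w i ≠ 0 → |g i| ≤ C) :
    |∑ i ∈ s, w i * g i| ≤ C :=
  calc |∑ i ∈ s, w i * g i|
      ≤ ∑ i ∈ s, |w i * g i| := abs_sum_le_sum_abs _ _
    _ ≤ ∑ i ∈ s, w i * C := sum_le_sum fun i hi => by
        rcases eq_or_ne (w i) 0 with h | h
        · simp [h]
        · rw [abs_mul, abs_of_nonneg (hw i hi)]
          exact mul_le_mul_of_nonneg_left (hg i hi h) (hw i hi)
    _ = C := by rw [← sum_mul, hsum, one_mul]

theorem bias_bound_general
    (I : ℕ) (τ : ℕ → ℝ)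
    (M δ α k : ℝ) (hk : 0 < k)
    (w : ℕ → ℝ)
    (hw_nonneg : ∀ i ≤ I, 0 ≤ w i)
    (hw_sum : ∑ i ∈ Finset.range (I + 1), w i = 1)
    (hw_supp : ∀ i, 1 ≤ i → i ≤ I → w i ≠ 0 → |k - τ i| < (1 + δ) * M)
    (hw_zero : w 0 ≠ 0 → k - δ * M < τ 1)
    (F : ℝ → ℝ)
    (hF_conv : ConvexOn ℝ (Set.Ici (0 : ℝ)) F)
    (hF_smooth : ContDiff ℝ 3 F)
    (hF3 : ∀ x, |iteratedDeriv 3 F x| ≤ α)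
    (hτ1 : τ 1 ≤ k - δ * M) :
    |∑ i ∈ Finset.range (I + 1), w i * (F (τ i) - F k)| ≤
      |deriv F k| * (δ + 1) * M + deriv (deriv F) k * (δ + 1) ^ 2 * M ^ 2 +
        (α / 6) * (1 + δ) ^ 3 * M ^ 3 := by
  have hw0 : w 0 = 0 := by_contra fun h => (hw_zero h).not_ge hτ1
  have hF'' : 0 ≤ deriv (deriv F) k :=
    hF_conv.deriv_deriv_nonneg (fun x _ => hF_smooth.differentiable (by norm_num) x)
      (Ici_mem_nhds hk)
  have hterm : ∀ i ∈ range (I + 1), w i ≠ 0 → |F (τ i) - F k| ≤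
      |deriv F k| * ((1 + δ) * M) + deriv (deriv F) k / 2 * ((1 + δ) * M) ^ 2
        + α / 6 * ((1 + δ) * M) ^ 3 := by
    intro i hi hwi
    have hi1 : 1 ≤ i := Nat.one_le_iff_ne_zero.2 (by rintro rfl; exact hwi hw0)
    have hiI : i ≤ I := Nat.lt_succ_iff.1 (mem_range.1 hi)
    refine abs_sub_le_of_taylor_two hF_smooth hF3 ?_ hF''
    rw [abs_sub_comm]
    exact (hw_supp i hi1 hiI hwi).le
  have hw : ∀ i ∈ range (I + 1), 0 ≤ w i :=
    fun i hi => hw_nonneg i (Nat.lt_succ_iff.1 (mem_range.1 hi))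
  refine (abs_sum_mul_le_of_sum_eq_one hw hw_sum hterm).trans ?_
  nlinarith [mul_nonneg hF'' (sq_nonneg ((1 + δ) * M))]

/-- Bias bound from the proof of Theorem 3: if the superhedging weights sum to 1,
are supported within the window `|k − τ| < (1+δ)M` (except possibly at strike 0,
which is ruled out by `τ₁ ≤ k − δM`), and `F` is convex, decreasing, `C³` with
`|F'''| ≤ α`, then the bias is bounded by
`|F'(k)|(δ+1)M + F''(k)(δ+1)²M² + (α/6)(1+δ)³M³`. -/
theorem bias_bound
    (I : ℕ) (hI : 0 < I) (τ : ℕ → ℝ) (hτ0 : τ 0 = 0) (hτmono : StrictMono τ)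
    (M δ α k : ℝ) (hM : 0 ≤ M) (hδ : 0 < δ) (hα : 0 ≤ α) (hk : 0 < k)
    (hmesh : ∀ i, 1 ≤ i → i < I → τ (i + 1) - τ i ≤ M)
    (w : ℕ → ℝ)
    (hw_nonneg : ∀ i ≤ I, 0 ≤ w i)
    (hw_sum : ∑ i ∈ Finset.range (I + 1), w i = 1)
    (hw_supp : ∀ i, 1 ≤ i → i ≤ I → w i ≠ 0 → |k - τ i| < (1 + δ) * M)
    (hw_zero : w 0 ≠ 0 → k - δ * M < τ 1)
    (F : ℝ → ℝ)
    (hF_nonneg : ∀ x, 0 ≤ x → 0 ≤ F x)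
    (hF_conv : ConvexOn ℝ (Set.Ici (0 : ℝ)) F)
    (hF_anti : AntitoneOn F (Set.Ici (0 : ℝ)))
    (hF_smooth : ContDiff ℝ 3 F)
    (hF3 : ∀ x, |iteratedDeriv 3 F x| ≤ α)
    (hτ1 : τ 1 ≤ k - δ * M) :
    |∑ i ∈ Finset.range (I + 1), w i * (F (τ i) - F k)| ≤
      |deriv F k| * (δ + 1) * M + deriv (deriv F) k * (δ + 1) ^ 2 * M ^ 2 +
        (α / 6) * (1 + δ) ^ 3 * M ^ 3 :=
  bias_bound_general I τ M δ α k hk w hw_nonneg hw_sum hw_supp hw_zero F hF_conv hF_smooth hF3 hτ1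
end
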